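/- arXiv:0708.2574 — 2 statements merged into one kernel-verified Lean document; each statement's English description precedes it below -/
import Mathlib

section
/- The q-Catalan number admits the product representation C_n(q) = Π_{i=1}^{n-1} (1 + q + ... + q^{n+i}) / Π_{i=1}^{n-1} (1 + q + ... + q^i), i.e., C_n(q) = Π_{i=1}^{n-1} [n+i+1]_q / [i+1]_q. -/
/-!
Splitting the q-factorial gives `[2n]_q! = [n]_q! · [n+1]_q · ∏_{i=1}^{n-1} [n+i+1]_q`, while
`∏_{i=1}^{n-1} [i+1]_q = [n]_q!` because `[1]_q = 1`. The claim follows by cancelling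
`[n]_q! · [n+1]_q`, which is nonzero since `[m]_q` evaluates to `m` at `q = 1`.
-/

open Polynomial Finset

noncomputable def qInt (m : ℕ) : Polynomial ℝ :=
  ∑ i ∈ Finset.range m, Polynomial.X ^ i

noncomputable def qFact (m : ℕ) : Polynomial ℝ :=
  ∏ i ∈ Finset.range m, qInt (i + 1)

theorem Finset.prod_range_eq_mul_prod_Icc {M : Type*} [CommMonoid M] (f : ℕ → M) {n : ℕ}
    (hn : 0 < n) : ∏ i ∈ range n, f i = f 0 * ∏ i ∈ Icc 1 (n - 1), f i := by
  obtain ⟨k, rfl⟩ := Nat.exists_eq_add_of_lt hn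
  rw [prod_range_eq_mul_Ico f hn, ← Ico_add_one_right_eq_Icc]
  rfl

lemma qInt_ne_zero {m : ℕ} (hm : 0 < m) : qInt m ≠ 0 := by
  intro h
  have h1 := congrArg (eval 1) h
  simp only [qInt, eval_finsetSum, eval_pow, eval_X, one_pow, sum_const, card_range,
    nsmul_eq_mul, mul_one, eval_zero, Nat.cast_eq_zero] at h1
  omega

lemma qFact_ne_zero (m : ℕ) : qFact m ≠ 0 :=
  prod_ne_zero_iff.mpr fun i _ => qInt_ne_zero i.succ_pos

lemma qInt_one : qInt 1 = 1 := by simp [qInt]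

lemma prod_Icc_qInt_succ (m : ℕ) : ∏ i ∈ Icc 1 (m - 1), qInt (i + 1) = qFact m := by
  rcases m.eq_zero_or_pos with rfl | hm
  · simp [qFact]
  · rw [qFact, prod_range_eq_mul_prod_Icc _ hm, zero_add, qInt_one, one_mul]

lemma qFact_add (m k : ℕ) : qFact (m + k) = qFact m * ∏ i ∈ range k, qInt (m + i + 1) := by
  simp only [qFact, prod_range_add, add_assoc]

lemma qFact_two_mul (n : ℕ) :
    qFact (2 * n) = qFact n * qInt (n + 1) * ∏ i ∈ Icc 1 (n - 1), qInt (n + i + 1) := by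
  rcases n.eq_zero_or_pos with rfl | hn
  · simp [qFact, qInt_one]
  · rw [two_mul, qFact_add, prod_range_eq_mul_prod_Icc _ hn, add_zero, mul_assoc]

theorem qCatalan_product_formula_general (n : ℕ) (P : Polynomial ℝ)
    (hP : qFact n ^ 2 * qInt (n + 1) * P = qFact (2 * n)) :
    P * ∏ i ∈ Finset.Icc 1 (n - 1), qInt (i + 1)
      = ∏ i ∈ Finset.Icc 1 (n - 1), qInt (n + i + 1) := by
  have hne : qFact n * qInt (n + 1) ≠ 0 :=
    mul_ne_zero (qFact_ne_zero n) (qInt_ne_zero n.succ_pos)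
  apply mul_left_cancel₀ hne
  calc qFact n * qInt (n + 1) * (P * ∏ i ∈ Icc 1 (n - 1), qInt (i + 1))
      = qFact n ^ 2 * qInt (n + 1) * P := by rw [prod_Icc_qInt_succ]; ring
    _ = qFact n * qInt (n + 1) * ∏ i ∈ Icc 1 (n - 1), qInt (n + i + 1) := by
      rw [hP, qFact_two_mul]

/-- The q-Catalan number admits the product representation
$C_n(q) = ∏_{i=1}^{n-1} [n+i+1]_q / [i+1]_q$. -/
theorem qCatalan_product_formula (n : ℕ) (hn : 1 ≤ n) (P : Polynomial ℝ)
    (hP : qFact n ^ 2 * qInt (n + 1) * P = qFact (2 * n)) :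
    P * ∏ i ∈ Finset.Icc 1 (n - 1), qInt (i + 1)
      = ∏ i ∈ Finset.Icc 1 (n - 1), qInt (n + i + 1) :=
  qCatalan_product_formula_general n P hP
end

section
/- The second derivative of the q-Catalan polynomial at q = 1 satisfies C_n''(1) = (1/12) n(n-1)(3n² - n - 4) · C_n, where C_n is the n-th Catalan number. -/
open Polynomial Finset

/-!
Read `f(q) / f(1)` as the probability generating function of the coefficients of `f`. Its mean
and variance, computed from `f'(1)` and `f''(1)`, add under products of polynomials, as for sums
of independent random variables. The coefficients of `[m]_q` are uniform on `{0, …, m - 1}`, with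
mean `(m - 1) / 2` and variance `(m² - 1) / 12`; summing gives those of `[m]_q!`, and dividing out
`C_n(q) = [2n]_q! / ([n]_q!² [n + 1]_q)` leaves mean `n(n - 1) / 2` and variance `n(n² - 1) / 6`,
which determine `C_n''(1) / C_n`.
-/

namespace Polynomial

variable {K : Type*} [Field K]

noncomputable def coeffMean (f : K[X]) : K :=
  (derivative f).eval 1 / f.eval 1

noncomputable def coeffVariance (f : K[X]) : K :=
  (derivative (derivative f)).eval 1 / f.eval 1 + coeffMean f - coeffMean f ^ 2

variable {f g : K[X]}

theorem coeffMean_mul (hf : f.eval 1 ≠ 0) (hg : g.eval 1 ≠ 0) :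
    coeffMean (f * g) = coeffMean f + coeffMean g := by
  simp only [coeffMean, derivative_mul, eval_add, eval_mul]
  field_simp

theorem coeffVariance_mul (hf : f.eval 1 ≠ 0) (hg : g.eval 1 ≠ 0) :
    coeffVariance (f * g) = coeffVariance f + coeffVariance g := by
  simp only [coeffVariance, coeffMean, derivative_mul, derivative_add, eval_add, eval_mul]
  field_simp
  ring

theorem eval_one_derivative_derivative (hf : f.eval 1 ≠ 0) :
    (derivative (derivative f)).eval 1
      = f.eval 1 * (coeffVariance f - coeffMean f + coeffMean f ^ 2) := by
  simp only [coeffVariance]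
  field_simp
  ring

end Polynomial

theorem eval_one_qInt (m : ℕ) : (qInt m).eval 1 = m := by
  simp [qInt]

theorem eval_one_qInt_succ_ne_zero (m : ℕ) : (qInt (m + 1)).eval 1 ≠ 0 := by
  rw [eval_one_qInt]
  exact_mod_cast m.succ_ne_zero

theorem eval_one_derivative_qInt (m : ℕ) :
    (derivative (qInt m)).eval 1 = m * (m - 1) / 2 := by
  induction m with
  | zero => simp [qInt]
  | succ k ih =>
    simp only [qInt, sum_range_succ, derivative_add, eval_add] at ih ⊢
    rw [ih, derivative_X_pow]
    simp only [eval_mul, eval_C, eval_pow, eval_X, one_pow, mul_one]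
    push_cast
    ring

theorem eval_one_derivative_derivative_qInt (m : ℕ) :
    (derivative (derivative (qInt m))).eval 1 = m * (m - 1) * (m - 2) / 3 := by
  induction m with
  | zero => simp [qInt]
  | succ k ih =>
    simp only [qInt, sum_range_succ, derivative_add, eval_add] at ih ⊢
    rw [ih, derivative_X_pow, derivative_C_mul_X_pow]
    simp only [eval_mul, eval_C, eval_pow, eval_X, one_pow, mul_one]
    rcases k with _ | j
    · norm_num
    · push_cast [Nat.add_sub_cancel]
      ring

theorem coeffMean_qInt (m : ℕ) (hm : m ≠ 0) : coeffMean (qInt m) = (m - 1) / 2 := by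
  rw [coeffMean, eval_one_derivative_qInt, eval_one_qInt]
  field_simp

theorem coeffVariance_qInt (m : ℕ) (hm : m ≠ 0) :
    coeffVariance (qInt m) = (m ^ 2 - 1) / 12 := by
  rw [coeffVariance, coeffMean_qInt m hm, eval_one_derivative_derivative_qInt, eval_one_qInt]
  field_simp
  ring

theorem qFact_succ (m : ℕ) : qFact (m + 1) = qFact m * qInt (m + 1) :=
  prod_range_succ _ _

theorem eval_one_qFact (m : ℕ) : (qFact m).eval 1 = m.factorial := by
  induction m with
  | zero => simp [qFact]
  | succ k ih =>
    rw [qFact_succ, eval_mul, ih, eval_one_qInt, Nat.factorial_succ]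
    push_cast
    ring

theorem eval_one_qFact_ne_zero (m : ℕ) : (qFact m).eval 1 ≠ 0 := by
  rw [eval_one_qFact]
  exact_mod_cast m.factorial_ne_zero

theorem coeffMean_qFact (m : ℕ) : coeffMean (qFact m) = m * (m - 1) / 4 := by
  induction m with
  | zero => simp [qFact, coeffMean]
  | succ k ih =>
    rw [qFact_succ, coeffMean_mul (eval_one_qFact_ne_zero k) (eval_one_qInt_succ_ne_zero k), ih,
      coeffMean_qInt _ k.succ_ne_zero]
    push_cast
    ring

theorem coeffVariance_qFact (m : ℕ) :
    coeffVariance (qFact m) = m * (m - 1) * (2 * m + 5) / 72 := by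
  induction m with
  | zero => simp [qFact, coeffVariance, coeffMean]
  | succ k ih =>
    rw [qFact_succ, coeffVariance_mul (eval_one_qFact_ne_zero k) (eval_one_qInt_succ_ne_zero k), ih,
      coeffVariance_qInt _ k.succ_ne_zero]
    push_cast
    ring

theorem qCatalan_second_derivative_at_one_general (n : ℕ) (P : Polynomial ℝ)
    (hP : qFact n ^ 2 * qInt (n + 1) * P = qFact (2 * n)) :
    (Polynomial.derivative (Polynomial.derivative P)).eval 1
      = (1 / 12 : ℝ) * (n : ℝ) * ((n : ℝ) - 1) * (3 * (n : ℝ) ^ 2 - (n : ℝ) - 4) * P.eval 1 := by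
  have hF : (qFact n ^ 2).eval 1 ≠ 0 := by
    simpa [eval_pow] using eval_one_qFact_ne_zero n
  have hD : (qFact n ^ 2 * qInt (n + 1)).eval 1 ≠ 0 := by
    rw [eval_mul]
    exact mul_ne_zero hF (eval_one_qInt_succ_ne_zero n)
  have hP1 : P.eval 1 ≠ 0 := by
    intro h
    apply eval_one_qFact_ne_zero (2 * n)
    rw [← hP, eval_mul, h, mul_zero]
  have hmean : coeffMean P = n * (n - 1) / 2 := by
    have := congrArg coeffMean hP
    rw [coeffMean_mul hD hP1, coeffMean_mul hF (eval_one_qInt_succ_ne_zero n), sq,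
      coeffMean_mul (eval_one_qFact_ne_zero n) (eval_one_qFact_ne_zero n), coeffMean_qFact,
      coeffMean_qInt _ n.succ_ne_zero, coeffMean_qFact] at this
    push_cast at this
    linear_combination this
  have hvar : coeffVariance P = n * (n ^ 2 - 1) / 6 := by
    have := congrArg coeffVariance hP
    rw [coeffVariance_mul hD hP1, coeffVariance_mul hF (eval_one_qInt_succ_ne_zero n), sq,
      coeffVariance_mul (eval_one_qFact_ne_zero n) (eval_one_qFact_ne_zero n), coeffVariance_qFact,
      coeffVariance_qInt _ n.succ_ne_zero, coeffVariance_qFact] at this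
    push_cast at this
    linear_combination this
  rw [eval_one_derivative_derivative hP1, hmean, hvar]
  ring

/-- $C_n''(1) = \frac{1}{12} n(n-1)(3n^2-n-4) C_n$. -/
theorem qCatalan_second_derivative_at_one (n : ℕ) (hn : 1 ≤ n) (P : Polynomial ℝ)
    (hP : qFact n ^ 2 * qInt (n + 1) * P = qFact (2 * n)) :
    (Polynomial.derivative (Polynomial.derivative P)).eval 1
      = (1 / 12 : ℝ) * (n : ℝ) * ((n : ℝ) - 1) * (3 * (n : ℝ) ^ 2 - (n : ℝ) - 4) * P.eval 1 :=
  qCatalan_second_derivative_at_one_general n P hP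
end
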